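/- Let p = p_n·∏_{i=1}^k (X − z_i)^{m_i} ∈ ℂ[X] be of degree n ≥ 2 with p_n ≠ 0 and k ≥ 2 distinct roots. Let Γ := max(1, log₂ max_j |z_j|) and let τ be the minimal nonnegative real with |p_i| ≤ 2^τ·|p_n| for all 0 ≤ i ≤ n−1. Let b be a real number such that b ≥ max(8n, n·log₂ n) and, for every i ∈ {1,…,k}: 2^{−b/(2 m_i)} ≤ min(1/(2n²), σ_i/(2n)); 2^{−b/2} ≤ |P_i| / (16·(n+1)·2^τ·max(1,|z_i|)^n); 2^{−b/(2 m_i)} < min((σ_i/(4n))^8, σ_i/(1024 n²)); and 2^{−b/8} < min(1/16, |P_i| / ((n+1)·2^{2nΓ + 8n})). Let ẑ_1,…,ẑ_n ∈ ℂ, put p̂ := p_n·∏_{j=1}^n (X − ẑ_j), and assume ‖p − p̂‖₁ ≤ 2^{−b}·‖p‖₁. Fix i ∈ {1,…,k}, let r_i be a real with min(1/(2n²), σ_i/(512 n²)) ≤ r_i ≤ min(1/n², σ_i/(64 n²)), let z̃_i ∈ ℂ satisfy |z̃_i − z_i| < r_i, let λ be a real with ‖p‖₁/(2|p_n|) ≤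 λ ≤ 2‖p‖₁/|p_n|, and set z_i* := z̃_i + n·r_i. Then |p̂(z_i*)|/|p_n| > (min(256, σ_i)/(1024 n))^{m_i}·|P_i|/8 ≥ 64·2^{−b}·λ·max(1,|z̃_i|)^n. -/

import Mathlib

open Polynomial Finset

noncomputable def onenorm (q : Polynomial ℂ) : ℝ := ∑ i ∈ q.support, ‖q.coeff i‖

lemma onenorm_nonneg (q : ℂ[X]) : 0 ≤ onenorm q :=
  Finset.sum_nonneg fun _ _ => norm_nonneg _

lemma onenorm_eq_sum_range {q : ℂ[X]} {N : ℕ} (h : q.natDegree < N) :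
    onenorm q = ∑ i ∈ Finset.range N, ‖q.coeff i‖ := by
  refine Finset.sum_subset (Polynomial.supp_subset_range h) ?_
  intro x _ hx
  simp [Polynomial.notMem_support_iff.mp hx]

lemma onenorm_one : onenorm (1 : ℂ[X]) = 1 := by
  rw [onenorm_eq_sum_range (N := 1) (by simp)]
  simp

lemma onenorm_mul_le (q r : ℂ[X]) : onenorm (q * r) ≤ onenorm q * onenorm r := by
  set N := q.natDegree + r.natDegree + 1 with hN
  have h1 : (q * r).natDegree < N := lt_of_le_of_lt natDegree_mul_le (Nat.lt_succ_self _)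
  have h2 : q.natDegree < N := by omega
  have h3 : r.natDegree < N := by omega
  rw [onenorm_eq_sum_range h1, onenorm_eq_sum_range h2, onenorm_eq_sum_range h3]
  have step1 : ∑ i ∈ Finset.range N, ‖(q * r).coeff i‖
      ≤ ∑ i ∈ Finset.range N, ∑ x ∈ Finset.HasAntidiagonal.antidiagonal i,
          ‖q.coeff x.1‖ * ‖r.coeff x.2‖ := by
    refine Finset.sum_le_sum fun i _ => ?_
    rw [Polynomial.coeff_mul]
    exact (norm_sum_le _ _).trans (le_of_eq (by simp [map_mul]))
  refine step1.trans ?_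
  rw [← Finset.sum_biUnion ?disj]
  case disj =>
    intro a _ b _ hab
    refine Finset.disjoint_left.2 fun x hxa hxb => hab ?_
    simp only [Finset.mem_coe, Finset.HasAntidiagonal.mem_antidiagonal] at hxa hxb
    omega
  · rw [Finset.sum_mul_sum]
    rw [← Finset.sum_product']
    refine Finset.sum_le_sum_of_subset_of_nonneg ?_ fun _ _ _ => by positivity
    intro x hx
    simp only [Finset.mem_biUnion, Finset.HasAntidiagonal.mem_antidiagonal, Finset.mem_range] at hx ⊢
    obtain ⟨a, ha, hx⟩ := hx
    rw [Finset.mem_product]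
    simp only [Finset.mem_range]
    omega

lemma onenorm_prod_le {α} (s : Finset α) (f : α → ℂ[X]) :
    onenorm (∏ j ∈ s, f j) ≤ ∏ j ∈ s, onenorm (f j) := by
  induction s using Finset.cons_induction with
  | empty => simp [onenorm_one]
  | cons a s ha ih =>
    rw [Finset.prod_cons, Finset.prod_cons]
    exact (onenorm_mul_le _ _).trans
      (mul_le_mul_of_nonneg_left ih (onenorm_nonneg _))

lemma onenorm_pow_le (q : ℂ[X]) (m : ℕ) : onenorm (q ^ m) ≤ onenorm q ^ m := by
  induction m with
  | zero => simp [onenorm_one]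
  | succ d ih =>
    rw [pow_succ, pow_succ]
    exact (onenorm_mul_le _ _).trans (mul_le_mul_of_nonneg_right ih (onenorm_nonneg _)) |>.trans
      (le_of_eq (by ring))

lemma onenorm_C_le (a : ℂ) : onenorm (Polynomial.C a) ≤ ‖a‖ := by
  by_cases h : a = 0
  · simp [onenorm, h]
  · simp [onenorm, Polynomial.support_C h]

lemma onenorm_X_sub_C_le (a : ℂ) : onenorm (Polynomial.X - Polynomial.C a) ≤ 1 + ‖a‖ := by
  have h : (Polynomial.X - Polynomial.C a).natDegree < 2 := by
    simpa using Polynomial.natDegree_X_sub_C a ▸ one_lt_two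
  rw [onenorm_eq_sum_range h]
  rw [Finset.sum_range_succ, Finset.sum_range_one]
  simp [Polynomial.coeff_sub, Polynomial.coeff_C, Polynomial.coeff_X]
  ring_nf
  simp [add_comm]

lemma abs_eval_le (q : ℂ[X]) (x : ℂ) (d : ℕ) (hd : q.natDegree ≤ d) :
    ‖q.eval x‖ ≤ onenorm q * max 1 (‖x‖) ^ d := by
  rw [Polynomial.eval_eq_sum_range, onenorm_eq_sum_range (Nat.lt_succ_self _), Finset.sum_mul]
  refine (norm_sum_le _ _).trans (Finset.sum_le_sum fun j hj => ?_)
  rw [norm_mul, norm_pow]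
  refine mul_le_mul_of_nonneg_left ?_ (norm_nonneg _)
  calc ‖x‖ ^ j ≤ max 1 (‖x‖) ^ j :=
        pow_le_pow_left₀ (norm_nonneg _) (le_max_right _ _) _
    _ ≤ max 1 (‖x‖) ^ d := by
        refine pow_le_pow_right₀ (le_max_left _ _) ?_
        have := Finset.mem_range.mp hj; omega
lemma rpow2_mono {x y : ℝ} (h : x ≤ y) : (2:ℝ)^x ≤ (2:ℝ)^y :=
  Real.rpow_le_rpow_of_exponent_le one_le_two h

lemma rpow2_pos (x : ℝ) : 0 < (2:ℝ)^x := Real.rpow_pos_of_pos two_pos x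

lemma rpow2_add (x y : ℝ) : (2:ℝ)^(x+y) = (2:ℝ)^x * (2:ℝ)^y := Real.rpow_add two_pos x y

lemma four_pow_eq (nn : ℕ) : ((4:ℝ))^nn = (2:ℝ)^((2*(nn:ℝ))) := by
  rw [show (4:ℝ) = 2^(2:ℕ) by norm_num, ← pow_mul, ← Real.rpow_natCast 2 (2*nn)]
  push_cast; ring_nf

lemma c1024_eq : (1024:ℝ) = (2:ℝ)^((10:ℝ)) := by
  rw [show ((10:ℝ)) = ((10:ℕ):ℝ) by norm_num, Real.rpow_natCast]; norm_num

lemma rpow2_pow (x : ℝ) (mm : ℕ) : ((2:ℝ)^x)^mm = (2:ℝ)^(x*(mm:ℝ)) := by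
  rw [← Real.rpow_natCast ((2:ℝ)^x) mm, ← Real.rpow_mul (by norm_num : (0:ℝ) ≤ 2)]

set_option maxHeartbeats 2000000 in
/-- Third part of Lemma 9 of the paper: lower bound for `|p̂(z_i*)|/|p_n|`. -/
theorem stmt8 (n k : ℕ) (hn : 2 ≤ n) (hk : 2 ≤ k)
    (c : ℂ) (hc : c ≠ 0)
    (z : Fin k → ℂ) (hz : Function.Injective z)
    (m : Fin k → ℕ) (hm : ∀ j, 1 ≤ m j) (hsum : ∑ j, m j = n)
    (p : Polynomial ℂ)
    (hp : p = Polynomial.C c * ∏ j, (Polynomial.X - Polynomial.C (z j)) ^ m j)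
    (σ : Fin k → ℝ)
    (hσ1 : ∀ i j, j ≠ i → σ i ≤ ‖z i - z j‖)
    (hσ2 : ∀ i, ∃ j, j ≠ i ∧ σ i = ‖z i - z j‖)
    (A : ℝ) (hA1 : ∀ j, ‖z j‖ ≤ A) (hA2 : ∃ j, A = ‖z j‖)
    (Γ : ℝ) (hΓ : Γ = max 1 (Real.logb 2 A))
    (τ : ℝ) (hτ0 : 0 ≤ τ)
    (hτ : ∀ i < n, ‖p.coeff i‖ ≤ 2 ^ τ * ‖c‖)
    (hτmin : ∀ τ' : ℝ, 0 ≤ τ' →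
      (∀ i < n, ‖p.coeff i‖ ≤ 2 ^ τ' * ‖c‖) → τ ≤ τ')
    (b : ℝ) (hb : max (8 * (n : ℝ)) ((n : ℝ) * Real.logb 2 n) ≤ b)
    (h1 : ∀ i, (2 : ℝ) ^ (-b / (2 * (m i : ℝ)))
        ≤ min (1 / (2 * (n : ℝ) ^ 2)) (σ i / (2 * n)))
    (h2 : ∀ i, (2 : ℝ) ^ (-b / 2) ≤
        ‖∏ j ∈ Finset.univ.erase i, (z i - z j) ^ m j‖ /
          (16 * ((n : ℝ) + 1) * 2 ^ τ * max 1 (‖z i‖) ^ n))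
    (h3 : ∀ i, (2 : ℝ) ^ (-b / (2 * (m i : ℝ)))
        < min ((σ i / (4 * n)) ^ 8) (σ i / (1024 * (n : ℝ) ^ 2)))
    (h4 : ∀ i, (2 : ℝ) ^ (-b / 8) <
        min (1 / 16)
          (‖∏ j ∈ Finset.univ.erase i, (z i - z j) ^ m j‖ /
            (((n : ℝ) + 1) * 2 ^ (2 * (n : ℝ) * Γ + 8 * n))))
    (zh : Fin n → ℂ) (ph : Polynomial ℂ)
    (hph : ph = Polynomial.C c * ∏ j, (Polynomial.X - Polynomial.C (zh j)))
    (hnorm : onenorm (p - ph) ≤ 2 ^ (-b) * onenorm p)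
    (i : Fin k) (ri : ℝ)
    (hri1 : min (1 / (2 * (n : ℝ) ^ 2)) (σ i / (512 * (n : ℝ) ^ 2)) ≤ ri)
    (hri2 : ri ≤ min (1 / ((n : ℝ) ^ 2)) (σ i / (64 * (n : ℝ) ^ 2)))
    (zt : ℂ) (hzt : ‖zt - z i‖ < ri)
    (lam : ℝ)
    (hlam1 : onenorm p / (2 * ‖c‖) ≤ lam)
    (hlam2 : lam ≤ 2 * onenorm p / ‖c‖) :
    (min 256 (σ i) / (1024 * (n : ℝ))) ^ m i *
        ‖∏ j ∈ Finset.univ.erase i, (z i - z j) ^ m j‖ / 8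
      < ‖ph.eval (zt + (((n : ℝ) * ri : ℝ) : ℂ))‖ / ‖c‖
    ∧ 64 * 2 ^ (-b) * lam * max 1 (‖zt‖) ^ n
      ≤ (min 256 (σ i) / (1024 * (n : ℝ))) ^ m i *
          ‖∏ j ∈ Finset.univ.erase i, (z i - z j) ^ m j‖ / 8 := by
  clear hτ hτmin hτ0 h2
  have hc0 : 0 < ‖c‖ := norm_pos_iff.mpr hc
  have hn2 : (2:ℝ) ≤ (n:ℝ) := by exact_mod_cast hn
  have hnpos : (0:ℝ) < (n:ℝ) := by linarith
  obtain ⟨j0, hj0ne, hj0⟩ := hσ2 i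
  have hσpos : 0 < σ i := by
    rw [hj0]
    exact norm_pos_iff.mpr (sub_ne_zero.2 fun h => hj0ne (hz h.symm))
  obtain ⟨ja, hja⟩ := hA2
  have hA0 : (0:ℝ) ≤ A := hja ▸ norm_nonneg _
  set Q := max 1 A with hQdef
  have hQ1 : (1:ℝ) ≤ Q := le_max_left _ _
  have hQ0 : (0:ℝ) ≤ Q := by linarith
  set P := ‖∏ j ∈ Finset.univ.erase i, (z i - z j) ^ m j‖ with hPdef
  have hzne : ∀ j ∈ Finset.univ.erase i, z i - z j ≠ 0 := by
    intro j hj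
    exact sub_ne_zero.2 fun h => (Finset.mem_erase.mp hj).1 (hz h.symm)
  have hPpos : 0 < P :=
    norm_pos_iff.mpr (Finset.prod_ne_zero_iff.mpr fun j hj => pow_ne_zero _ (hzne j hj))
  have hPeq : P = ∏ j ∈ Finset.univ.erase i, ‖z i - z j‖ ^ m j := by
    rw [hPdef, norm_prod]
    exact Finset.prod_congr rfl fun j _ => norm_pow _ _
  -- triangle inequality helpers
  have tri1 : ∀ a b : ℂ, ‖a+b‖ ≤ ‖a‖ + ‖b‖ := norm_add_le
  have tri2 : ∀ a b : ℂ, ‖a‖ - ‖b‖ ≤ ‖a - b‖ := fun a b => by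
    exact norm_sub_norm_le a b
  have habs_comm : ∀ a b : ℂ, ‖a - b‖ = ‖b - a‖ := fun a b =>
    norm_sub_rev a b
  -- ri facts
  have hr0 : 0 < ri := lt_of_lt_of_le (lt_min (by positivity) (by positivity)) hri1
  have hri_a : ri ≤ 1/(n:ℝ)^2 := hri2.trans (min_le_left _ _)
  have hri_b : ri ≤ σ i/(64*(n:ℝ)^2) := hri2.trans (min_le_right _ _)
  set w : ℂ := zt + (((n:ℝ) * ri : ℝ) : ℂ) with hw
  have habs_nri : ‖((((n:ℝ) * ri : ℝ)) : ℂ)‖ = (n:ℝ) * ri := by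
    rw [Complex.norm_real, Real.norm_eq_abs, abs_of_nonneg (by positivity)]
  -- d1
  have d1 : ((n:ℝ)-1)*ri < ‖w - z i‖ := by
    have e1 : (w - z i) = (((n:ℝ)*ri:ℝ):ℂ) - (-(zt - z i)) := by rw [hw]; ring
    have e2 : ‖-(zt - z i)‖ = ‖zt - z i‖ := by
      rw [show -(zt - z i) = z i - zt by ring, habs_comm]
    have := tri2 ((((n:ℝ)*ri:ℝ)):ℂ) (-(zt - z i))
    rw [← e1, e2, habs_nri] at this
    linarith
  -- d2
  have hri_b' : ri * (64*(n:ℝ)^2) ≤ σ i := by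
    rw [← le_div_iff₀ (by positivity)]; exact hri_b
  have d2 : ‖w - z i‖ ≤ σ i * (1/(32*(n:ℝ))) := by
    have e1 : (w - z i) = (zt - z i) + (((n:ℝ)*ri:ℝ):ℂ) := by rw [hw]; ring
    have h1' : ‖w - z i‖ ≤ ri + (n:ℝ)*ri := by
      rw [e1]
      refine (tri1 _ _).trans ?_
      rw [habs_nri]
      linarith [hzt]
    refine h1'.trans ?_
    rw [show σ i * (1/(32*(n:ℝ))) = σ i/(32*(n:ℝ)) by ring,
      le_div_iff₀ (by positivity : (0:ℝ) < 32*(n:ℝ))]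
    nlinarith [mul_nonneg (mul_nonneg hr0.le hnpos.le) (by linarith : (0:ℝ) ≤ (n:ℝ)-1)]
  -- d3
  have hcε0 : (0:ℝ) < 1/(32*(n:ℝ)) := by positivity
  have hcε1 : 1/(32*(n:ℝ)) ≤ 1/2 := by
    rw [div_le_div_iff₀ (by positivity) (by norm_num)]
    linarith
  have d3 : ∀ j ∈ Finset.univ.erase i,
      (1 - 1/(32*(n:ℝ))) * ‖z i - z j‖ ≤ ‖w - z j‖ := by
    intro j hj
    have hji : j ≠ i := (Finset.mem_erase.mp hj).1
    have hσj : σ i ≤ ‖z i - z j‖ := hσ1 i j hji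
    have htr : ‖z i - z j‖ - ‖z i - w‖ ≤ ‖w - z j‖ := by
      have := tri2 (z i - z j) (z i - w)
      rw [show (z i - z j) - (z i - w) = w - z j by ring] at this
      exact this
    have hwzi : ‖z i - w‖ ≤ ‖z i - z j‖ * (1/(32*(n:ℝ))) := by
      rw [habs_comm]
      refine d2.trans ?_
      exact mul_le_mul_of_nonneg_right hσj hcε0.le
    nlinarith
  -- product lower bound over erase
  have hprodlow : (31/32) * P ≤ ∏ j ∈ Finset.univ.erase i, ‖w - z j‖ ^ m j := by
    have h1cε : (0:ℝ) ≤ 1 - 1/(32*(n:ℝ)) := by linarith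
    have A1 : ∏ j ∈ Finset.univ.erase i,
        ((1 - 1/(32*(n:ℝ))) * ‖z i - z j‖) ^ m j
        ≤ ∏ j ∈ Finset.univ.erase i, ‖w - z j‖ ^ m j := by
      refine Finset.prod_le_prod (fun j hj => by positivity) (fun j hj => ?_)
      exact pow_le_pow_left₀ (by positivity) (d3 j hj) _
    have A2 : ∏ j ∈ Finset.univ.erase i,
        ((1 - 1/(32*(n:ℝ))) * ‖z i - z j‖) ^ m j
        = (1 - 1/(32*(n:ℝ))) ^ (∑ j ∈ Finset.univ.erase i, m j) * P := by
      rw [hPeq, ← Finset.prod_pow_eq_pow_sum, ← Finset.prod_mul_distrib]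
      exact Finset.prod_congr rfl fun j _ => mul_pow _ _ _
    have hSn : (∑ j ∈ Finset.univ.erase i, m j) ≤ n := by
      have := Finset.sum_erase_add Finset.univ m (Finset.mem_univ i)
      omega
    have hbern : (31/32:ℝ) ≤ (1 - 1/(32*(n:ℝ))) ^ n := by
      have hB := one_add_mul_le_pow (a := -(1/(32*(n:ℝ)))) (by linarith) n
      have hcn : (n:ℝ) * (1/(32*(n:ℝ))) = 1/32 := by
        rw [mul_one_div, div_eq_div_iff (ne_of_gt (by positivity)) (by norm_num : (32:ℝ) ≠ 0)]
        ring
      have : 1 + (n:ℝ) * (-(1/(32*(n:ℝ)))) = 31/32 := by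
        rw [mul_neg, hcn]; norm_num
      rw [this] at hB
      calc (31/32:ℝ) ≤ (1 + -(1/(32*(n:ℝ))))^n := hB
        _ = (1 - 1/(32*(n:ℝ)))^n := by ring_nf
    have hmono : (1 - 1/(32*(n:ℝ))) ^ n ≤ (1 - 1/(32*(n:ℝ))) ^ (∑ j ∈ Finset.univ.erase i, m j) :=
      pow_le_pow_of_le_one h1cε (by linarith) hSn
    calc (31/32) * P ≤ (1 - 1/(32*(n:ℝ))) ^ (∑ j ∈ Finset.univ.erase i, m j) * P := by
          refine mul_le_mul_of_nonneg_right ?_ hPpos.le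
          linarith
      _ = _ := A2.symm
      _ ≤ _ := A1
  -- t facts
  set t := min 256 (σ i) / (1024 * (n:ℝ)) with ht_def
  have ht0 : 0 < t := div_pos (lt_min (by norm_num) hσpos) (by positivity)
  have htle : t ≤ ((n:ℝ)-1)*ri := by
    rcases le_total (σ i) 256 with hcase | hcase
    · have hminσ : min 256 (σ i) = σ i := min_eq_right hcase
      have hrge : σ i/(512*(n:ℝ)^2) ≤ ri := by
        refine le_trans (le_min ?_ le_rfl) hri1
        rw [div_le_div_iff₀ (by positivity) (by positivity)]
        nlinarith [sq_nonneg (n:ℝ)]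
      have key : σ i / (1024*(n:ℝ)) ≤ ((n:ℝ)-1) * (σ i/(512*(n:ℝ)^2)) := by
        rw [mul_div_assoc', div_le_div_iff₀ (by positivity) (by positivity)]
        nlinarith [mul_nonneg (mul_nonneg hσpos.le hnpos.le) (by linarith : (0:ℝ) ≤ 512*(n:ℝ) - 1024)]
      rw [ht_def, hminσ]
      refine key.trans ?_
      exact mul_le_mul_of_nonneg_left hrge (by linarith)
    · have hminσ : min 256 (σ i) = 256 := min_eq_left hcase
      have hmin2 : (1:ℝ)/(2*(n:ℝ)^2) ≤ σ i/(512*(n:ℝ)^2) := by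
        rw [div_le_div_iff₀ (by positivity) (by positivity)]
        nlinarith
      have hrge : (1:ℝ)/(2*(n:ℝ)^2) ≤ ri := le_trans (le_min le_rfl hmin2) hri1
      have key : (256:ℝ) / (1024*(n:ℝ)) ≤ ((n:ℝ)-1) * (1/(2*(n:ℝ)^2)) := by
        rw [mul_div_assoc', div_le_div_iff₀ (by positivity) (by positivity)]
        nlinarith
      rw [ht_def, hminσ]
      refine key.trans ?_
      exact mul_le_mul_of_nonneg_left hrge (by linarith)
  have hmi1 : 1 ≤ m i := hm i
  have hd1T : t ^ m i < ‖w - z i‖ ^ m i := by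
    refine pow_lt_pow_left₀ ?_ ht0.le (by omega)
    calc t ≤ ((n:ℝ)-1)*ri := htle
      _ < _ := d1
  have hTP8 : 0 < t ^ m i * P := mul_pos (pow_pos ht0 _) hPpos
  -- full product lower bound
  have hlowmain : t ^ m i * P * (31/32) < ∏ j, ‖w - z j‖ ^ m j := by
    rw [← Finset.mul_prod_erase Finset.univ _ (Finset.mem_univ i)]
    have hppos : (0:ℝ) < ∏ j ∈ Finset.univ.erase i, ‖w - z j‖ ^ m j :=
      lt_of_lt_of_le (by positivity) hprodlow
    calc t ^ m i * P * (31/32) = t ^ m i * ((31/32) * P) := by ring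
      _ ≤ t ^ m i * ∏ j ∈ Finset.univ.erase i, ‖w - z j‖ ^ m j :=
          mul_le_mul_of_nonneg_left hprodlow (pow_nonneg ht0.le _)
      _ < _ := mul_lt_mul_of_pos_right hd1T hppos
  -- eval formula
  have hpeval : ‖p.eval w‖ = ‖c‖ * ∏ j, ‖w - z j‖ ^ m j := by
    rw [hp]
    simp only [Polynomial.eval_mul, Polynomial.eval_prod, Polynomial.eval_pow,
      Polynomial.eval_sub, Polynomial.eval_X, Polynomial.eval_C, norm_mul, norm_prod, norm_pow]
  -- degree bounds
  have hdegp : p.natDegree ≤ n := by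
    rw [hp]
    refine Polynomial.natDegree_mul_le.trans ?_
    rw [Polynomial.natDegree_C]
    refine le_trans (by omega : 0 + (∏ j, (Polynomial.X - Polynomial.C (z j)) ^ m j).natDegree ≤ (∏ j, (Polynomial.X - Polynomial.C (z j)) ^ m j).natDegree) ?_
    refine (Polynomial.natDegree_prod_le _ _).trans ?_
    simp only [Polynomial.natDegree_pow, Polynomial.natDegree_X_sub_C, mul_one]
    omega
  have hdegph : ph.natDegree ≤ n := by
    rw [hph]
    refine Polynomial.natDegree_mul_le.trans ?_
    rw [Polynomial.natDegree_C]
    refine le_trans (by omega : 0 + (∏ j, (Polynomial.X - Polynomial.C (zh j))).natDegree ≤ (∏ j, (Polynomial.X - Polynomial.C (zh j))).natDegree) ?_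
    refine (Polynomial.natDegree_prod_le _ _).trans ?_
    simp [Polynomial.natDegree_X_sub_C]
  have hdegq : (p - ph).natDegree ≤ n := (Polynomial.natDegree_sub_le _ _).trans (max_le hdegp hdegph)
  -- onenorm bound
  have hone : onenorm p ≤ ‖c‖ * (2*Q)^n := by
    rw [hp]
    calc onenorm _ ≤ onenorm (Polynomial.C c) * onenorm (∏ j, (Polynomial.X - Polynomial.C (z j)) ^ m j) :=
          onenorm_mul_le _ _
      _ ≤ ‖c‖ * ∏ j, onenorm ((Polynomial.X - Polynomial.C (z j)) ^ m j) := by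
          refine mul_le_mul (onenorm_C_le c) (onenorm_prod_le _ _) (onenorm_nonneg _) (norm_nonneg _)
      _ ≤ ‖c‖ * ∏ j, (2*Q)^(m j) := by
          refine mul_le_mul_of_nonneg_left ?_ (norm_nonneg _)
          refine Finset.prod_le_prod (fun j _ => onenorm_nonneg _) (fun j _ => ?_)
          refine (onenorm_pow_le _ _).trans ?_
          refine pow_le_pow_left₀ (onenorm_nonneg _) ?_ _
          refine (onenorm_X_sub_C_le _).trans ?_
          have := hA1 j
          have := le_max_right (1:ℝ) A
          linarith
      _ = ‖c‖ * (2*Q)^n := by rw [Finset.prod_pow_eq_pow_sum, hsum]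
  -- point bounds
  have hzt_le : ‖zt‖ ≤ A + ri := by
    have : zt = (zt - z i) + z i := by ring
    rw [this]
    refine (tri1 _ _).trans ?_
    linarith [hzt.le, hA1 i]
  have hri4 : ri ≤ 1/4 := by
    refine hri_a.trans ?_
    rw [div_le_div_iff₀ (by positivity) (by norm_num)]
    nlinarith
  have hM0 : max 1 (‖zt‖) ≤ 5/4 * Q := by
    refine max_le (by linarith) ?_
    have hAQ : A ≤ Q := le_max_right _ _
    linarith
  have hnri : (n:ℝ)*ri ≤ 1/2 := by
    have h' : ri * (n:ℝ)^2 ≤ 1 := by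
      rw [← le_div_iff₀ (by positivity)]; exact hri_a
    have hint : 0 ≤ ri * (n:ℝ) * ((n:ℝ)-2) :=
      mul_nonneg (mul_nonneg hr0.le hnpos.le) (by linarith)
    linarith [hint, h']
  have hMw : max 1 (‖w‖) ≤ 7/4 * Q := by
    refine max_le (by linarith) ?_
    have hAQ : A ≤ Q := le_max_right _ _
    have : ‖w‖ ≤ ‖zt‖ + (n:ℝ)*ri := by
      rw [hw]
      refine (tri1 _ _).trans ?_
      rw [habs_nri]
    linarith
  -- E bound
  have hEdiff : ‖p.eval w - ph.eval w‖
      ≤ ‖c‖ * ((2:ℝ)^(-b) * ((7/2)^n * Q^(2*n))) := by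
    have h0 : p.eval w - ph.eval w = (p - ph).eval w := by simp
    rw [h0]
    have s1 : ‖(p - ph).eval w‖ ≤ onenorm (p - ph) * max 1 (‖w‖) ^ n :=
      abs_eval_le _ _ n hdegq
    have s2 : onenorm (p - ph) * max 1 (‖w‖) ^ n
        ≤ ((2:ℝ)^(-b) * onenorm p) * (7/4*Q)^n := by
      refine mul_le_mul hnorm (pow_le_pow_left₀ (le_trans zero_le_one (le_max_left _ _)) hMw n)
        (pow_nonneg (le_trans zero_le_one (le_max_left _ _)) n) ?_
      exact mul_nonneg (rpow2_pos (-b)).le (onenorm_nonneg _)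
    have s3 : ((2:ℝ)^(-b) * onenorm p) * (7/4*Q)^n
        ≤ ((2:ℝ)^(-b) * (‖c‖ * (2*Q)^n)) * (7/4*Q)^n := by
      refine mul_le_mul_of_nonneg_right (mul_le_mul_of_nonneg_left hone (rpow2_pos (-b)).le) ?_
      positivity
    have s4 : ((2:ℝ)^(-b) * (‖c‖ * (2*Q)^n)) * (7/4*Q)^n
        = ‖c‖ * ((2:ℝ)^(-b) * ((7/2)^n * Q^(2*n))) := by
      have e : (2*Q)^n * (7/4*Q)^n = (7/2)^n * Q^(2*n) := by
        rw [← mul_pow, show (2*Q)*(7/4*Q) = 7/2*Q^2 by ring, mul_pow, pow_mul]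
      calc ((2:ℝ)^(-b) * (‖c‖ * (2*Q)^n)) * (7/4*Q)^n
          = ‖c‖ * ((2:ℝ)^(-b) * ((2*Q)^n * (7/4*Q)^n)) := by ring
        _ = _ := by rw [e]
    calc ‖(p - ph).eval w‖ ≤ _ := s1
      _ ≤ _ := s2
      _ ≤ _ := s3
      _ = _ := s4
  -- Q vs Γ
  have hQ2G : Q^(2*n) ≤ (2:ℝ)^(2*(n:ℝ)*Γ) := by
    have hQle : Q ≤ (2:ℝ)^Γ := by
      have h2Γ : (2:ℝ)^(1:ℝ) ≤ (2:ℝ)^Γ := rpow2_mono (by rw [hΓ]; exact le_max_left _ _)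
      rw [Real.rpow_one] at h2Γ
      refine max_le (by linarith) ?_
      rcases le_total A 1 with hA'|hA'
      · linarith
      · have hAeq : A = (2:ℝ)^(Real.logb 2 A) :=
          (Real.rpow_logb two_pos (by norm_num) (by linarith)).symm
        calc A = (2:ℝ)^(Real.logb 2 A) := hAeq
          _ ≤ (2:ℝ)^Γ := rpow2_mono (by rw [hΓ]; exact le_max_right _ _)
    calc Q^(2*n) ≤ ((2:ℝ)^Γ)^(2*n) := pow_le_pow_left₀ hQ0 hQle _
      _ = (2:ℝ)^(2*(n:ℝ)*Γ) := by rw [rpow2_pow]; congr 1; push_cast; ring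
  -- P lower bound from h4
  have hPlow : ((n:ℝ)+1) * ((2:ℝ)^(2*(n:ℝ)*Γ + 8*(n:ℝ)) * (2:ℝ)^(-b/8)) < P := by
    have hh := (lt_min_iff.mp (h4 i)).2
    rw [lt_div_iff₀ (by positivity)] at hh
    calc ((n:ℝ)+1) * ((2:ℝ)^(2*(n:ℝ)*Γ + 8*(n:ℝ)) * (2:ℝ)^(-b/8))
        = (2:ℝ)^(-b/8) * (((n:ℝ)+1) * (2:ℝ)^(2*(n:ℝ)*Γ + 8*(n:ℝ))) := by ring
      _ < P := hh
  have hb8 : 8*(n:ℝ) ≤ b := le_trans (le_max_left _ _) hb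
  have hbpos : 0 < b := by linarith
  -- m i ≤ n - 1
  have hSge : 1 ≤ ∑ j ∈ Finset.univ.erase i, m j :=
    le_trans (hm j0) (Finset.single_le_sum (fun _ _ => Nat.zero_le _)
      (Finset.mem_erase.mpr ⟨hj0ne, Finset.mem_univ _⟩))
  have hmile : m i + 1 ≤ n := by
    have := Finset.sum_erase_add Finset.univ m (Finset.mem_univ i)
    omega
  have hmiR : (m i : ℝ) ≤ (n:ℝ) - 1 := by
    have : ((m i : ℕ) : ℝ) + 1 ≤ (n:ℝ) := by exact_mod_cast hmile
    linarith
  have hmiR0 : (0:ℝ) < (m i:ℝ) := by exact_mod_cast hmi1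
  -- the master inequality
  have hmaster : (2:ℝ)^(-b) * (1024 * 4^n * Q^(2*n)) ≤ t ^ m i * P := by
    have hmain : (2:ℝ)^(-b) * (1024 * (4:ℝ)^n)
        ≤ t ^ m i * (((n:ℝ)+1) * ((2:ℝ)^(8*(n:ℝ)) * (2:ℝ)^(-b/8))) := by
      have hLHS : (2:ℝ)^(-b) * (1024 * (4:ℝ)^n) = (2:ℝ)^(-b + (10 + 2*(n:ℝ))) := by
        rw [four_pow_eq, c1024_eq, rpow2_add (-b) (10 + 2*(n:ℝ)), rpow2_add 10 (2*(n:ℝ))]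
      have hcomm : ∀ X : ℝ, X ≤ t ^ m i →
          X * ((2:ℝ)^(8*(n:ℝ)) * (2:ℝ)^(-b/8))
            ≤ t ^ m i * (((n:ℝ)+1) * ((2:ℝ)^(8*(n:ℝ)) * (2:ℝ)^(-b/8))) := by
        intro X hX
        have hpos : (0:ℝ) ≤ (2:ℝ)^(8*(n:ℝ)) * (2:ℝ)^(-b/8) :=
          (mul_pos (rpow2_pos _) (rpow2_pos _)).le
        calc X * ((2:ℝ)^(8*(n:ℝ)) * (2:ℝ)^(-b/8))
            ≤ t ^ m i * ((2:ℝ)^(8*(n:ℝ)) * (2:ℝ)^(-b/8)) :=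
              mul_le_mul_of_nonneg_right hX hpos
          _ ≤ _ := by
              refine mul_le_mul_of_nonneg_left ?_ (pow_nonneg ht0.le _)
              exact le_mul_of_one_le_left hpos (by linarith)
      rcases le_total (σ i) 256 with hcase | hcase
      · -- case A : σ i ≤ 256
        set u : ℝ := (2:ℝ)^(-b/(16*(m i:ℝ))) with hu_def
        have hu0 : 0 < u := rpow2_pos _
        have hu8 : u^(8:ℕ) = (2:ℝ)^(-b/(2*(m i:ℝ))) := by
          rw [hu_def, rpow2_pow]; congr 1; ring
        have hult : u < σ i/(4*(n:ℝ)) := by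
          refine lt_of_pow_lt_pow_left₀ 8 (by positivity) ?_
          rw [hu8]
          exact (lt_min_iff.mp (h3 i)).1
        have ht_ge : u/256 ≤ t := by
          have e : (σ i/(4*(n:ℝ)))/256 = σ i/(1024*(n:ℝ)) := by ring
          rw [ht_def, min_eq_right hcase, ← e]
          linarith
        have hum : u^(m i) = (2:ℝ)^(-b/16) := by
          rw [hu_def, rpow2_pow]; congr 1
          field_simp
        have h256 : (256:ℝ)^(m i) ≤ (2:ℝ)^(8*(n:ℝ) - 8) := by
          have e : (256:ℝ)^(m i) = (2:ℝ)^(8*((m i:ℕ):ℝ)) := by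
            rw [show (256:ℝ) = 2^(8:ℕ) by norm_num, ← pow_mul, ← Real.rpow_natCast 2 (8 * m i)]
            congr 1; push_cast; ring
          rw [e]
          exact rpow2_mono (by linarith [hmiR])
        have hX : (2:ℝ)^(-b/16 - (8*(n:ℝ) - 8)) ≤ t ^ m i := by
          have hdiv : (2:ℝ)^(-b/16 - (8*(n:ℝ) - 8)) = (2:ℝ)^(-b/16) / (2:ℝ)^(8*(n:ℝ) - 8) :=
            Real.rpow_sub two_pos _ _
          have step1 : (2:ℝ)^(-b/16) / (2:ℝ)^(8*(n:ℝ) - 8) ≤ u^(m i)/(256:ℝ)^(m i) := by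
            rw [hum]
            exact div_le_div_of_nonneg_left (rpow2_pos _).le (by positivity) h256
          have step2 : u^(m i)/(256:ℝ)^(m i) = (u/256)^(m i) := (div_pow u 256 (m i)).symm
          have step3 : (u/256)^(m i) ≤ t ^ m i := pow_le_pow_left₀ (by positivity) ht_ge _
          rw [hdiv]
          calc (2:ℝ)^(-b/16) / (2:ℝ)^(8*(n:ℝ) - 8) ≤ _ := step1
            _ = _ := step2
            _ ≤ _ := step3
        refine le_trans ?_ (hcomm _ hX)
        rw [hLHS, ← rpow2_add (8*(n:ℝ)) (-b/8), ← rpow2_add (-b/16 - (8*(n:ℝ) - 8)) _]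
        exact rpow2_mono (by linarith)
      · -- case B : 256 ≤ σ i
        have h1a : (2:ℝ)^(-b/(2*(m i:ℝ))) ≤ 1/(2*(n:ℝ)^2) := (le_min_iff.mp (h1 i)).1
        have hX : (2:ℝ)^(-b/2) ≤ t ^ m i := by
          have e : (2:ℝ)^(-b/2) = ((2:ℝ)^(-b/(2*(m i:ℝ))))^(m i) := by
            rw [rpow2_pow]; congr 1
            field_simp
          have s1' : ((2:ℝ)^(-b/(2*(m i:ℝ))))^(m i) ≤ (1/(2*(n:ℝ)^2))^(m i) :=
            pow_le_pow_left₀ (rpow2_pos _).le h1a _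
          have s2' : (1/(2*(n:ℝ)^2))^(m i) ≤ t ^ m i := by
            refine pow_le_pow_left₀ (by positivity) ?_ _
            rw [ht_def, min_eq_left hcase, div_le_div_iff₀ (by positivity) (by positivity)]
            have : 512*(n:ℝ)*2 ≤ 512*(n:ℝ)*(n:ℝ) :=
              mul_le_mul_of_nonneg_left hn2 (by positivity)
            linarith
          rw [e]
          exact s1'.trans s2'
        refine le_trans ?_ (hcomm _ hX)
        rw [hLHS, ← rpow2_add (8*(n:ℝ)) (-b/8), ← rpow2_add (-b/2) _]
        exact rpow2_mono (by linarith)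
    have step1 : (2:ℝ)^(-b) * (1024 * 4^n * Q^(2*n))
        = ((2:ℝ)^(-b) * (1024 * (4:ℝ)^n)) * Q^(2*n) := by ring
    have step2 : ((2:ℝ)^(-b) * (1024 * (4:ℝ)^n)) * Q^(2*n)
        ≤ (t ^ m i * (((n:ℝ)+1) * ((2:ℝ)^(8*(n:ℝ)) * (2:ℝ)^(-b/8)))) * Q^(2*n) :=
      mul_le_mul_of_nonneg_right hmain (pow_nonneg hQ0 _)
    have step3 : (t ^ m i * (((n:ℝ)+1) * ((2:ℝ)^(8*(n:ℝ)) * (2:ℝ)^(-b/8)))) * Q^(2*n)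
        ≤ (t ^ m i * (((n:ℝ)+1) * ((2:ℝ)^(8*(n:ℝ)) * (2:ℝ)^(-b/8)))) * (2:ℝ)^(2*(n:ℝ)*Γ) := by
      refine mul_le_mul_of_nonneg_left hQ2G ?_
      have := rpow2_pos (8*(n:ℝ))
      have := rpow2_pos (-b/8)
      positivity
    have step4 : (t ^ m i * (((n:ℝ)+1) * ((2:ℝ)^(8*(n:ℝ)) * (2:ℝ)^(-b/8)))) * (2:ℝ)^(2*(n:ℝ)*Γ)
        = t ^ m i * (((n:ℝ)+1) * ((2:ℝ)^(2*(n:ℝ)*Γ + 8*(n:ℝ)) * (2:ℝ)^(-b/8))) := by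
      rw [rpow2_add]; ring
    have step5 : t ^ m i * (((n:ℝ)+1) * ((2:ℝ)^(2*(n:ℝ)*Γ + 8*(n:ℝ)) * (2:ℝ)^(-b/8)))
        ≤ t ^ m i * P :=
      mul_le_mul_of_nonneg_left hPlow.le (pow_nonneg ht0.le _)
    calc (2:ℝ)^(-b) * (1024 * 4^n * Q^(2*n)) = _ := step1
      _ ≤ _ := step2
      _ ≤ _ := step3
      _ = _ := step4
      _ ≤ _ := step5
  constructor
  · -- part 1
    rw [lt_div_iff₀ hc0]
    have h31 : ‖c‖ * (t^ m i * P * (31/32)) < ‖p.eval w‖ := by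
      rw [hpeval]
      exact mul_lt_mul_of_pos_left hlowmain hc0
    have hE2 : ‖p.eval w - ph.eval w‖ ≤ ‖c‖ * (t ^ m i * P / 2) := by
      refine hEdiff.trans (mul_le_mul_of_nonneg_left ?_ hc0.le)
      have e1 : (2:ℝ)^(-b) * ((7/2)^n * Q^(2*n)) ≤ (2:ℝ)^(-b) * ((4:ℝ)^n * Q^(2*n)) := by
        have h72 : ((7/2:ℝ))^n ≤ (4:ℝ)^n := pow_le_pow_left₀ (by norm_num) (by norm_num) n
        have hq := pow_nonneg hQ0 (2*n)
        have h4n : (0:ℝ) ≤ (4:ℝ)^n := by positivity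
        exact mul_le_mul_of_nonneg_left
          (mul_le_mul_of_nonneg_right h72 hq) (rpow2_pos (-b)).le
      refine e1.trans ?_
      have e3 : (2:ℝ)^(-b) * ((4:ℝ)^n * Q^(2*n)) = ((2:ℝ)^(-b) * (1024 * 4^n * Q^(2*n)))/1024 := by
        ring
      rw [e3]
      linarith [hmaster, hTP8.le]
    have htri : ‖p.eval w‖ ≤ ‖ph.eval w‖ + ‖p.eval w - ph.eval w‖ := by
      calc ‖p.eval w‖ = ‖ph.eval w + (p.eval w - ph.eval w)‖ := by
            congr 1; ring
        _ ≤ _ := tri1 _ _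
    have e31 : ‖c‖ * (t ^ m i * P * (31/32)) = (31/32) * (‖c‖ * (t ^ m i * P)) := by ring
    have e2' : ‖c‖ * (t ^ m i * P / 2) = (1/2) * (‖c‖ * (t ^ m i * P)) := by ring
    have e8 : t ^ m i * P / 8 * ‖c‖ = (1/8) * (‖c‖ * (t ^ m i * P)) := by ring
    rw [e31] at h31
    rw [e2'] at hE2
    rw [e8]
    have hYpos : 0 < ‖c‖ * (t ^ m i * P) := mul_pos hc0 hTP8
    linarith
  · -- part 2
    have hlam0 : 0 ≤ lam := le_trans (div_nonneg (onenorm_nonneg p) (by positivity)) hlam1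
    have hlam' : lam ≤ 2*(2*Q)^n := by
      refine hlam2.trans ?_
      rw [div_le_iff₀ hc0]
      linarith [hone]
    have hM0n : max 1 (‖zt‖) ^ n ≤ (5/4*Q)^n :=
      pow_le_pow_left₀ (le_trans zero_le_one (le_max_left _ _)) hM0 n
    have c1 : 64 * (2:ℝ)^(-b) * lam * max 1 (‖zt‖) ^ n
        ≤ 64 * (2:ℝ)^(-b) * (2*(2*Q)^n) * (5/4*Q)^n := by
      have hmax0 : (0:ℝ) ≤ max 1 (‖zt‖) ^ n := pow_nonneg (le_trans zero_le_one (le_max_left _ _)) n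
      have h2b : (0:ℝ) ≤ 64 * (2:ℝ)^(-b) := by positivity
      refine mul_le_mul (mul_le_mul_of_nonneg_left hlam' h2b) hM0n hmax0 ?_
      positivity
    have c2 : 64 * (2:ℝ)^(-b) * (2*(2*Q)^n) * (5/4*Q)^n
        = (2:ℝ)^(-b) * (128 * ((5/2)^n * Q^(2*n))) := by
      have e : (2*Q)^n * (5/4*Q)^n = (5/2)^n * Q^(2*n) := by
        rw [← mul_pow, show (2*Q)*(5/4*Q) = 5/2*Q^2 by ring, mul_pow, pow_mul]
      calc 64 * (2:ℝ)^(-b) * (2*(2*Q)^n) * (5/4*Q)^n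
          = (2:ℝ)^(-b) * (128 * ((2*Q)^n * (5/4*Q)^n)) := by ring
        _ = _ := by rw [e]
    have c3 : (2:ℝ)^(-b) * (128 * ((5/2)^n * Q^(2*n)))
        ≤ ((2:ℝ)^(-b) * (1024 * 4^n * Q^(2*n)))/8 := by
      have h52 : ((5/2:ℝ))^n ≤ (4:ℝ)^n := pow_le_pow_left₀ (by norm_num) (by norm_num) n
      have hq := pow_nonneg hQ0 (2*n)
      have step : (2:ℝ)^(-b) * (128 * ((5/2)^n * Q^(2*n)))
          ≤ (2:ℝ)^(-b) * (128 * ((4:ℝ)^n * Q^(2*n))) := by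
        refine mul_le_mul_of_nonneg_left ?_ (rpow2_pos (-b)).le
        exact mul_le_mul_of_nonneg_left (mul_le_mul_of_nonneg_right h52 hq) (by norm_num)
      refine step.trans (le_of_eq ?_)
      ring
    calc 64 * (2:ℝ)^(-b) * lam * max 1 (‖zt‖) ^ n ≤ _ := c1
      _ = _ := c2
      _ ≤ _ := c3
      _ ≤ t ^ m i * P / 8 := by linarith [hmaster]
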